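/- For all integers n ≥ 2 and k ≥ 1, there exists a set S of vertices of P_{2n+1}^k with |S| = ((2n+1)^k + 1)/2 + 1 = α(P_{2n+1}^k) + 1 such that the induced subgraph P_{2n+1}^k[S] has maximum degree exactly 1. -/

import Mathlib

/-!
Colour each vertex `u` of `P_m^k` by the sign `∏ i, s i (u i)` for sign patterns `s i` on the
path, and let `S` be the vertices of sign `+1`; expanding the product gives
`2|S| = m^k + ∏ i, ∑ x, s i x`. With the alternating pattern in every coordinate, `S` is the
independent set of even vertices, of size `(m^k + 1)/2`, and it is maximum because flipping the
first nonzero coordinate (`1 ↔ 2`, `3 ↔ 4`, …) matches every vertex but `0` with a neighbour.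
Replacing the pattern of one coordinate by `+ + - + + - + - …`, whose sum is `3` instead of `1`,
adds exactly one vertex to `S`. An edge inside `S` then joins equal signs of that coordinate, and
as no three consecutive signs of the pattern agree, every vertex of `S` has at most one
neighbour in `S`.
-/

open Finset

/-- The path graph on vertex set `{1,…,m}`, realized on `Fin m`
(vertex `i : Fin m` stands for label `i+1`); label `i` is adjacent to label `i+1`. -/
def pathGraph' (m : ℕ) : SimpleGraph (Fin m) where
  Adj i j := (i : ℕ) + 1 = (j : ℕ) ∨ (j : ℕ) + 1 = (i : ℕ)
  symm := by constructor; intro i j h; tauto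
  loopless := by constructor; intro i h; omega

/-- The Cartesian (box) product of `k` copies of the path `P_m`:
two vertices are adjacent iff they differ in exactly one coordinate, and
in that coordinate they are adjacent in the path. -/
def boxPower (m k : ℕ) : SimpleGraph (Fin k → Fin m) where
  Adj u v := ∃ i, (pathGraph' m).Adj (u i) (v i) ∧ ∀ j, j ≠ i → u j = v j
  symm := by
    constructor
    rintro u v ⟨i, hadj, h⟩
    exact ⟨i, hadj.symm, fun j hj => (h j hj).symm⟩
  loopless := by
    constructor
    rintro u ⟨i, hadj, -⟩
    exact hadj.ne rfl

/-- A finite set of vertices is independent if its vertices are pairwise nonadjacent. -/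
def IsIndepFinset {V : Type*} (G : SimpleGraph V) (S : Finset V) : Prop :=
  ∀ u ∈ S, ∀ v ∈ S, ¬ G.Adj u v

/-- The independence number `α(G)` of a finite graph. -/
noncomputable def indepNum {V : Type*} [Fintype V] (G : SimpleGraph V) : ℕ :=
  sSup {n | ∃ S : Finset V, IsIndepFinset G S ∧ S.card = n}

open scoped Classical in
/-- The maximum degree `Δ(G[S])` of the subgraph of `G` induced on `S`. -/
noncomputable def maxDegOn {V : Type*} (G : SimpleGraph V) (S : Finset V) : ℕ :=
  S.sup fun v => (S.filter fun u => G.Adj v u).card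

/-- `f(G)`: the minimum, over vertex subsets `S` of size `α(G)+1`, of the maximum
degree of the induced subgraph `G[S]`. -/
noncomputable def minMaxDeg {V : Type*} [Fintype V] (G : SimpleGraph V) : ℕ :=
  sInf {d | ∃ S : Finset V, S.card = indepNum G + 1 ∧ maxDegOn G S = d}

section MaxDegOn

variable {V : Type*} {G : SimpleGraph V} {S : Finset V}

theorem maxDegOn_le_one
    (h : ∀ u ∈ S, ∀ v ∈ S, ∀ w ∈ S, G.Adj u v → G.Adj u w → v = w) : maxDegOn G S ≤ 1 := by
  classical
  refine Finset.sup_le fun u hu => Finset.card_le_one.2 fun v hv w hw => ?_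
  rw [mem_filter] at hv hw
  exact h u hu v hv.1 w hw.1 hv.2 hw.2

theorem one_le_maxDegOn {u v : V} (hu : u ∈ S) (hv : v ∈ S) (huv : G.Adj u v) :
    1 ≤ maxDegOn G S := by
  classical
  exact le_trans (one_le_card.2 ⟨v, mem_filter.2 ⟨hv, huv⟩⟩)
    (le_sup (f := fun u => (S.filter fun w => G.Adj u w).card) hu)

end MaxDegOn

section Independence

variable {V : Type*} [Fintype V] {G : SimpleGraph V}

theorem IsIndepFinset.two_mul_card_le [DecidableEq V] {T : Finset V} (hT : IsIndepFinset G T)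
    {μ : V → V} (hμ : Function.Involutive μ) (hadj : ∀ v, μ v ≠ v → G.Adj v (μ v)) :
    2 * #T ≤ Fintype.card V + #{v | μ v = v} := by
  have hinter : T ∩ T.image μ ⊆ ({v | μ v = v} : Finset V) := by
    intro v hv
    obtain ⟨hvT, hvμ⟩ := mem_inter.1 hv
    obtain ⟨w, hwT, rfl⟩ := mem_image.1 hvμ
    rw [mem_filter, hμ w]
    by_contra hne
    exact hT w hwT (μ w) hvT (hadj w fun h => hne ⟨mem_univ _, h.symm⟩)
  have himage : #(T.image μ) = #T := card_image_of_injective T hμ.injective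
  have := card_union_add_card_inter T (T.image μ)
  have := card_le_card hinter
  have := card_le_univ (T ∪ T.image μ)
  omega

theorem indepNum_eq_card {S : Finset V} (hS : IsIndepFinset G S)
    (hmax : ∀ T, IsIndepFinset G T → #T ≤ #S) : indepNum G = #S :=
  le_antisymm (csSup_le ⟨_, S, hS, rfl⟩ fun _ ⟨T, hT, hcard⟩ => hcard ▸ hmax T hT)
    (le_csSup ⟨#S, fun _ ⟨T, hT, hcard⟩ => hcard ▸ hmax T hT⟩ ⟨S, hS, rfl⟩)

end Independence

theorem two_mul_card_filter_eq_one {V : Type*} [Fintype V] (χ : V → ℤˣ) :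
    (2 * #{v | χ v = 1} : ℤ) = Fintype.card V + ∑ v, (χ v : ℤ) := by
  have hχ : ∀ v, (χ v : ℤ) = 2 * (if χ v = 1 then 1 else 0) - 1 := fun v => by
    rcases Int.units_eq_one_or (χ v) with h | h <;> simp [h]
  simp only [hχ, sum_sub_distrib, ← mul_sum, sum_boole, sum_const, card_univ]
  ring

section SignLevelSet

variable {m k : ℕ}

def gridSign (s : Fin k → Fin m → ℤˣ) (u : Fin k → Fin m) : ℤˣ := ∏ i, s i (u i)

def signLevelSet (s : Fin k → Fin m → ℤˣ) : Finset (Fin k → Fin m) := {u | gridSign s u = 1}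

variable {s : Fin k → Fin m → ℤˣ}

theorem mem_signLevelSet {u : Fin k → Fin m} : u ∈ signLevelSet s ↔ gridSign s u = 1 := by
  simp [signLevelSet]

theorem two_mul_card_signLevelSet (s : Fin k → Fin m → ℤˣ) :
    (2 * #(signLevelSet s) : ℤ) = m ^ k + ∏ i, ∑ x, (s i x : ℤ) := by
  rw [signLevelSet, two_mul_card_filter_eq_one, Fintype.prod_sum]
  simp [gridSign]

theorem gridSign_eq_gridSign_iff {u v : Fin k → Fin m} {i : Fin k} (h : ∀ j ≠ i, u j = v j) :
    gridSign s u = gridSign s v ↔ s i (u i) = s i (v i) := by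
  have hrest : ∏ j ∈ univ.erase i, s j (u j) = ∏ j ∈ univ.erase i, s j (v j) :=
    prod_congr rfl fun j hj => by rw [h j (ne_of_mem_erase hj)]
  rw [gridSign, gridSign, ← mul_prod_erase univ (fun j => s j (u j)) (mem_univ i),
    ← mul_prod_erase univ (fun j => s j (v j)) (mem_univ i), hrest, mul_left_inj]

theorem exists_flat_coord_of_adj {u v : Fin k → Fin m} (hu : u ∈ signLevelSet s)
    (hv : v ∈ signLevelSet s) (huv : (boxPower m k).Adj u v) :
    ∃ i, (pathGraph' m).Adj (u i) (v i) ∧ s i (u i) = s i (v i) ∧ ∀ j ≠ i, u j = v j := by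
  obtain ⟨i, hadj, hrest⟩ := huv
  rw [mem_signLevelSet] at hu hv
  exact ⟨i, hadj, (gridSign_eq_gridSign_iff hrest).1 (hu.trans hv.symm), hrest⟩

theorem isIndepFinset_signLevelSet (hs : ∀ i x y, (pathGraph' m).Adj x y → s i x ≠ s i y) :
    IsIndepFinset (boxPower m k) (signLevelSet s) := fun _ hu _ hv huv =>
  let ⟨i, hadj, heq, _⟩ := exists_flat_coord_of_adj hu hv huv
  hs i _ _ hadj heq

theorem maxDegOn_signLevelSet_le_one (i₀ : Fin k)
    (hflat : ∀ i ≠ i₀, ∀ x y, (pathGraph' m).Adj x y → s i x ≠ s i y)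
    (hbent : ∀ x y z, (pathGraph' m).Adj x y → (pathGraph' m).Adj x z →
      s i₀ x = s i₀ y → s i₀ x = s i₀ z → y = z) :
    maxDegOn (boxPower m k) (signLevelSet s) ≤ 1 := by
  refine maxDegOn_le_one fun u hu v hv w hw huv huw => ?_
  obtain ⟨i, hadj, heq, hrest⟩ := exists_flat_coord_of_adj hu hv huv
  obtain ⟨i', hadj', heq', hrest'⟩ := exists_flat_coord_of_adj hu hw huw
  have hi : i = i₀ := by_contra fun h => hflat i h _ _ hadj heq
  have hi' : i' = i₀ := by_contra fun h => hflat i' h _ _ hadj' heq'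
  rw [hi] at hadj heq hrest
  rw [hi'] at hadj' heq' hrest'
  funext j
  by_cases hj : j = i₀
  · rw [hj]
    exact hbent _ _ _ hadj hadj' heq heq'
  · rw [← hrest j hj, hrest' j hj]

theorem one_le_maxDegOn_signLevelSet {u : Fin k → Fin m} (hu : u ∈ signLevelSet s) {i : Fin k}
    {y : Fin m} (hadj : (pathGraph' m).Adj (u i) y) (hflat : s i (u i) = s i y) :
    1 ≤ maxDegOn (boxPower m k) (signLevelSet s) := by
  have hrest : ∀ j ≠ i, u j = Function.update u i y j := fun j hj =>
    (Function.update_of_ne hj _ _).symm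
  refine one_le_maxDegOn hu ?_ ⟨i, by rwa [Function.update_self], hrest⟩
  rw [mem_signLevelSet, ← mem_signLevelSet.1 hu, eq_comm, gridSign_eq_gridSign_iff hrest,
    Function.update_self, hflat]

end SignLevelSet

section GridFlip

variable {α : Type*} [Zero α] {k : ℕ}

theorem exists_first_ne_zero {u : Fin k → α} (hu : u ≠ 0) :
    ∃ i, u i ≠ 0 ∧ ∀ j < i, u j = 0 := by
  obtain ⟨i₀, hi₀⟩ := Function.ne_iff.1 hu
  obtain ⟨i, hi, hmin⟩ := wellFounded_lt.has_min {i | u i ≠ 0} ⟨i₀, hi₀⟩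
  exact ⟨i, hi, fun j hj => by_contra fun h => hmin j h hj⟩

variable [DecidableEq α] {f : α → α} {u : Fin k → α} {i : Fin k}

/-- Applies `f` to the first nonzero coordinate of `u`; when `f 0 = 0`, applying `f` to the
zero coordinates before it as well changes nothing, and makes the condition invariant under
the flip. -/
def gridFlip (f : α → α) (u : Fin k → α) : Fin k → α :=
  fun i => if ∀ j < i, u j = 0 then f (u i) else u i

theorem gridFlip_of_forall_lt (h : ∀ j < i, u j = 0) : gridFlip f u i = f (u i) := if_pos h

theorem gridFlip_of_not_forall_lt (h : ¬∀ j < i, u j = 0) : gridFlip f u i = u i := if_neg h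

theorem eq_zero_of_gridFlip_eq_self (hfix : ∀ x, f x = x → x = 0) (hu : gridFlip f u = u) :
    u = 0 := by
  by_contra hne
  obtain ⟨i, hi, hbefore⟩ := exists_first_ne_zero hne
  exact hi (hfix _ (by rw [← gridFlip_of_forall_lt (f := f) hbefore, hu]))

variable (hf : Function.Involutive f) (hf0 : f 0 = 0)
include hf hf0

theorem gridFlip_eq_zero_iff : gridFlip f u i = 0 ↔ u i = 0 := by
  by_cases h : ∀ j < i, u j = 0
  · rw [gridFlip_of_forall_lt h]
    exact hf.injective.eq_iff' hf0
  · rw [gridFlip_of_not_forall_lt h]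

theorem gridFlip_involutive : Function.Involutive (gridFlip (k := k) f) := by
  intro u
  funext i
  have hcond : (∀ j < i, gridFlip f u j = 0) ↔ ∀ j < i, u j = 0 :=
    forall₂_congr fun j _ => gridFlip_eq_zero_iff hf hf0
  by_cases h : ∀ j < i, u j = 0
  · rw [gridFlip_of_forall_lt (hcond.2 h), gridFlip_of_forall_lt h, hf]
  · rw [gridFlip_of_not_forall_lt (mt hcond.1 h), gridFlip_of_not_forall_lt h]

end GridFlip

theorem boxPower_adj_gridFlip {m k : ℕ} [NeZero m] {f : Fin m → Fin m} (hf0 : f 0 = 0)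
    (hadj : ∀ x ≠ 0, (pathGraph' m).Adj x (f x)) {u : Fin k → Fin m} (hu : u ≠ 0) :
    (boxPower m k).Adj u (gridFlip f u) := by
  obtain ⟨i, hi, hbefore⟩ := exists_first_ne_zero hu
  refine ⟨i, by rw [gridFlip_of_forall_lt hbefore]; exact hadj _ hi, fun j hj => ?_⟩
  rcases hj.lt_or_gt with hji | hij
  · rw [gridFlip_of_forall_lt fun l hl => hbefore l (hl.trans hji), hbefore j hji, hf0]
  · rw [gridFlip_of_not_forall_lt fun h => hi (h i hij)]

section PathFlip

variable {n : ℕ}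

/-- The involution `1 ↔ 2, 3 ↔ 4, …, 2n-1 ↔ 2n` of `P_{2n+1}` fixing `0` (the subtraction
truncates at `0`). -/
def pathFlip (n : ℕ) (x : Fin (2 * n + 1)) : Fin (2 * n + 1) :=
  if h : (x : ℕ) % 2 = 1 then ⟨x + 1, by have := x.isLt; omega⟩ else ⟨x - 1, by omega⟩

theorem pathFlip_val (x : Fin (2 * n + 1)) :
    (pathFlip n x : ℕ) = if (x : ℕ) % 2 = 1 then (x : ℕ) + 1 else (x : ℕ) - 1 := by
  unfold pathFlip
  split_ifs <;> rfl

theorem pathFlip_involutive : Function.Involutive (pathFlip n) := fun x => by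
  ext
  simp only [pathFlip_val]
  split_ifs <;> omega

theorem pathFlip_zero : pathFlip n 0 = 0 := by
  ext
  simp [pathFlip_val]

theorem eq_zero_of_pathFlip_eq_self {x : Fin (2 * n + 1)} (hx : pathFlip n x = x) : x = 0 := by
  rw [Fin.ext_iff, pathFlip_val] at hx
  ext
  rw [Fin.val_zero]
  split_ifs at hx <;> omega

theorem pathGraph'_adj_pathFlip {x : Fin (2 * n + 1)} (hx : x ≠ 0) :
    (pathGraph' (2 * n + 1)).Adj x (pathFlip n x) := by
  have hx : (x : ℕ) ≠ 0 := Fin.val_ne_iff.2 hx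
  change (x : ℕ) + 1 = pathFlip n x ∨ (pathFlip n x : ℕ) + 1 = x
  rw [pathFlip_val]
  split_ifs <;> omega

end PathFlip

theorem IsIndepFinset.two_mul_card_le_boxPower {n k : ℕ}
    {T : Finset (Fin k → Fin (2 * n + 1))} (hT : IsIndepFinset (boxPower (2 * n + 1) k) T) :
    2 * #T ≤ (2 * n + 1) ^ k + 1 := by
  have hfix : #({u | gridFlip (pathFlip n) u = u} : Finset (Fin k → Fin (2 * n + 1))) ≤ 1 :=
    card_le_one.2 fun u hu v hv => by
      rw [mem_filter] at hu hv
      rw [eq_zero_of_gridFlip_eq_self (fun _ => eq_zero_of_pathFlip_eq_self) hu.2,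
        eq_zero_of_gridFlip_eq_self (fun _ => eq_zero_of_pathFlip_eq_self) hv.2]
  have hadj : ∀ u, gridFlip (pathFlip n) u ≠ u →
      (boxPower (2 * n + 1) k).Adj u (gridFlip (pathFlip n) u) := by
    intro u hu
    refine boxPower_adj_gridFlip pathFlip_zero (fun _ => pathGraph'_adj_pathFlip) ?_
    rintro rfl
    exact hu (funext fun _ => (gridFlip_eq_zero_iff pathFlip_involutive pathFlip_zero).2 rfl)
  have := hT.two_mul_card_le (gridFlip_involutive pathFlip_involutive pathFlip_zero) hadj
  simp only [Fintype.card_fun, Fintype.card_fin] at this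
  omega

theorem neg_one_pow_eq_neg_one_pow_iff {a b : ℕ} :
    (-1 : ℤˣ) ^ a = (-1) ^ b ↔ a % 2 = b % 2 := by
  simp only [neg_one_pow_eq_ite, Nat.even_iff]
  split_ifs <;> simp <;> omega

def altSign (t : ℕ) : ℤˣ := (-1) ^ t

/-- The pattern `+ + - + + - + - + …`: `altSign` with the signs at `1, 2, 3` reversed. -/
def bentSign (t : ℕ) : ℤˣ := (-1) ^ (if t ∈ Icc 1 3 then t + 1 else t)

theorem altSign_ne_of_adj {a b : ℕ} (hab : a + 1 = b ∨ b + 1 = a) : altSign a ≠ altSign b := by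
  rw [altSign, altSign, Ne, neg_one_pow_eq_neg_one_pow_iff]
  omega

theorem bentSign_eq_of_adj {a b c : ℕ} (hab : a + 1 = b ∨ b + 1 = a) (hac : a + 1 = c ∨ c + 1 = a)
    (hb : bentSign a = bentSign b) (hc : bentSign a = bentSign c) : b = c := by
  simp only [bentSign, neg_one_pow_eq_neg_one_pow_iff, mem_Icc] at hb hc
  split_ifs at hb hc <;> omega

theorem sum_altSign (n : ℕ) : ∑ x : Fin (2 * n + 1), (altSign x : ℤ) = 1 := by
  simp [altSign, Fin.sum_univ_eq_sum_range (fun t => ((-1 : ℤ) ^ t)), neg_one_geom_sum]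

theorem sum_bentSign {n : ℕ} (hn : 2 ≤ n) : ∑ x : Fin (2 * n + 1), (bentSign x : ℤ) = 3 := by
  rw [Fin.sum_univ_eq_sum_range (fun t => (bentSign t : ℤ))]
  induction n, hn using Nat.le_induction with
  | base => simp [sum_range_succ, bentSign]
  | succ n hn ih =>
    rw [show 2 * (n + 1) + 1 = 2 * n + 1 + 1 + 1 by ring, sum_range_succ, sum_range_succ, ih]
    simp [bentSign, show ¬ 2 * n + 1 ≤ 3 by omega, show ¬ 2 * n + 1 + 1 ≤ 3 by omega, pow_succ]

theorem indepNum_boxPower (n k : ℕ) :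
    indepNum (boxPower (2 * n + 1) k) = ((2 * n + 1) ^ k + 1) / 2 := by
  set S := signLevelSet fun (_ : Fin k) (x : Fin (2 * n + 1)) => altSign x
  have hS : IsIndepFinset (boxPower (2 * n + 1) k) S :=
    isIndepFinset_signLevelSet fun _ _ _ hxy => altSign_ne_of_adj hxy
  have hcard : 2 * #S = (2 * n + 1) ^ k + 1 := by
    have := two_mul_card_signLevelSet fun (_ : Fin k) (x : Fin (2 * n + 1)) => altSign x
    simp only [sum_altSign, prod_const_one] at this
    exact_mod_cast this
  rw [indepNum_eq_card hS fun T hT => by have := hT.two_mul_card_le_boxPower; omega]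
  omega

section BentPattern

variable {m k : ℕ}

def bentPattern (m : ℕ) (i₀ : Fin k) : Fin k → Fin m → ℤˣ :=
  fun i x => if i = i₀ then bentSign x else altSign x

theorem card_signLevelSet_bentPattern {n : ℕ} (hn : 2 ≤ n) (i₀ : Fin k) :
    #(signLevelSet (bentPattern (2 * n + 1) i₀)) = ((2 * n + 1) ^ k + 1) / 2 + 1 := by
  have h := two_mul_card_signLevelSet (bentPattern (2 * n + 1) i₀)
  have hprod : ∏ i, ∑ x : Fin (2 * n + 1), (bentPattern (2 * n + 1) i₀ i x : ℤ) = 3 := by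
    simp only [bentPattern, apply_ite (fun σ : ℤˣ => (σ : ℤ)), sum_ite_irrel, sum_bentSign hn,
      sum_altSign]
    simp
  rw [hprod] at h
  obtain ⟨q, hq⟩ := (odd_two_mul_add_one n).pow (n := k)
  have h' : 2 * #(signLevelSet (bentPattern (2 * n + 1) i₀)) = (2 * n + 1) ^ k + 3 := by
    exact_mod_cast h
  omega

theorem maxDegOn_signLevelSet_bentPattern (hm : 1 < m) (i₀ : Fin k) :
    maxDegOn (boxPower m k) (signLevelSet (bentPattern m i₀)) = 1 := by
  have : NeZero m := ⟨by omega⟩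
  refine le_antisymm ?_ ?_
  · refine maxDegOn_signLevelSet_le_one i₀ (fun i hi x y hxy => ?_)
      fun x y z hxy hxz hy hz => Fin.ext (bentSign_eq_of_adj hxy hxz ?_ ?_)
    · simpa [bentPattern, hi] using altSign_ne_of_adj hxy
    · simpa [bentPattern] using hy
    · simpa [bentPattern] using hz
  · have h0 : (0 : Fin k → Fin m) ∈ signLevelSet (bentPattern m i₀) := by
      simp [mem_signLevelSet, gridSign, bentPattern, altSign, bentSign]
    exact one_le_maxDegOn_signLevelSet h0 (i := i₀) (y := ⟨1, hm⟩) (Or.inl rfl)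
      (by simp [bentPattern, bentSign])

end BentPattern

theorem exists_set_maxDeg_one (n k : ℕ) (hn : 2 ≤ n) (hk : 1 ≤ k) :
    ∃ S : Finset (Fin k → Fin (2 * n + 1)),
      S.card = ((2 * n + 1) ^ k + 1) / 2 + 1 ∧
      S.card = indepNum (boxPower (2 * n + 1) k) + 1 ∧
      maxDegOn (boxPower (2 * n + 1) k) S = 1 := by
  have hcard := card_signLevelSet_bentPattern hn (⟨0, hk⟩ : Fin k)
  exact ⟨_, hcard, by rw [hcard, indepNum_boxPower],
    maxDegOn_signLevelSet_bentPattern (by omega) _⟩
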